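/- arXiv:0805.3205 — 7 statements merged into one kernel-verified Lean document; each statement's English description precedes it below -/
import Mathlib

section
/- Let Θ ⊆ ℝ be an interval, let a₁, a₂, b₁, b₂ ≥ 0 with a₁ + a₂ > 0 and b₁ + b₂ > 0, and let π : Θ → [0,∞) be a measurable probability density (∫_Θ π(θ) dθ = 1) such that a₂π(θ) + b₂ > 0 whenever b₁ ≤ (a₁+a₂)π(θ). Define I_π : Θ → [0,1] by I_π(θ) = 0 if (a₁+a₂)π(θ) < b₁; I_π(θ) = ((a₁+a₂)π(θ) − b₁)/(a₂π(θ) + b₂) if b₁ ≤ (a₁+a₂)π(θ) and a₁π(θ) ≤ b₁ + b₂; and I_π(θ) = 1 if a₁π(θ) > b₁ + b₂. Then for every measurable function I : Θ → [0,1], R(I_π) ≤ R(I), where R(I) = ∫_Θ [ (a₁(1−I(θ)) + (a₂/2)(1−I(θ))²) π(θ) + b₁ I(θ) + (b₂/2) I(θ)² ] dθ (the integral taken with values in [0,∞]). -/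
/-!
The Bayes risk is the integral over `Θ` of `bayesIntegrand (π θ) (I θ)`, so it suffices to
minimize the integrand pointwise. For fixed `p = π θ` the integrand is, up to a constant, the
convex quadratic `t ↦ A/2 t² - B t` with `A = a₂ p + b₂ ≥ 0` and `B = (a₁ + a₂) p - b₁`, and
`I_π θ` is its minimizer `B / A` clamped to `[0, 1]`.
-/

open MeasureTheory

/-- The Theorem-1 solution (optimal membership function) associated with the
prior density `π` and the loss parameters `a₁, a₂, b₁, b₂`. -/
noncomputable def thmOneSol (a1 a2 b1 b2 : ℝ) (pr : ℝ → ℝ) (θ : ℝ) : ℝ :=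
  if (a1 + a2) * pr θ < b1 then 0
  else if a1 * pr θ ≤ b1 + b2 then ((a1 + a2) * pr θ - b1) / (a2 * pr θ + b2)
  else 1

/-- The Bayes risk of a membership function `I` under the prior density `π`
on `Θ`, for the loss of equation (1); the integral is taken in `[0,∞]`. -/
noncomputable def risk (Θ : Set ℝ) (a1 a2 b1 b2 : ℝ) (pr I : ℝ → ℝ) : ENNReal :=
  ∫⁻ θ in Θ, ENNReal.ofReal
    ((a1 * (1 - I θ) + a2 / 2 * (1 - I θ) ^ 2) * pr θ
      + b1 * I θ + b2 / 2 * (I θ) ^ 2)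

/-- First-order optimality: `A * s - B` is the derivative of the quadratic at `s`. -/
lemma quadratic_le_quadratic_of_variational {A B s t : ℝ} (hA : 0 ≤ A)
    (hst : 0 ≤ (t - s) * (A * s - B)) :
    A / 2 * s ^ 2 - B * s ≤ A / 2 * t ^ 2 - B * t := by
  nlinarith [mul_nonneg hA (sq_nonneg (t - s))]

noncomputable def bayesIntegrand (a1 a2 b1 b2 p t : ℝ) : ℝ :=
  (a1 * (1 - t) + a2 / 2 * (1 - t) ^ 2) * p + b1 * t + b2 / 2 * t ^ 2

lemma bayesIntegrand_eq (a1 a2 b1 b2 p t : ℝ) :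
    bayesIntegrand a1 a2 b1 b2 p t
      = (a1 + a2 / 2) * p + ((a2 * p + b2) / 2 * t ^ 2 - ((a1 + a2) * p - b1) * t) := by
  unfold bayesIntegrand
  ring

lemma thmOneSol_variational {a1 a2 b1 b2 : ℝ} {pr : ℝ → ℝ} {θ t : ℝ}
    (hden : b1 ≤ (a1 + a2) * pr θ → 0 < a2 * pr θ + b2) (ht : t ∈ Set.Icc (0 : ℝ) 1) :
    0 ≤ (t - thmOneSol a1 a2 b1 b2 pr θ)
      * ((a2 * pr θ + b2) * thmOneSol a1 a2 b1 b2 pr θ - ((a1 + a2) * pr θ - b1)) := by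
  obtain ⟨ht0, ht1⟩ := ht
  unfold thmOneSol
  split_ifs with hlow
  · nlinarith
  · rw [mul_div_cancel₀ _ (hden (not_lt.mp hlow)).ne']
    simp
  · nlinarith

lemma bayesIntegrand_thmOneSol_le {a1 a2 b1 b2 : ℝ} {pr : ℝ → ℝ} {θ t : ℝ}
    (ha2 : 0 ≤ a2) (hb2 : 0 ≤ b2) (hp : 0 ≤ pr θ)
    (hden : b1 ≤ (a1 + a2) * pr θ → 0 < a2 * pr θ + b2) (ht : t ∈ Set.Icc (0 : ℝ) 1) :
    bayesIntegrand a1 a2 b1 b2 (pr θ) (thmOneSol a1 a2 b1 b2 pr θ)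
      ≤ bayesIntegrand a1 a2 b1 b2 (pr θ) t := by
  rw [bayesIntegrand_eq, bayesIntegrand_eq]
  exact add_le_add_right
    (quadratic_le_quadratic_of_variational (by positivity) (thmOneSol_variational hden ht)) _

theorem stmt1_general (Θ : Set ℝ) (hΘm : MeasurableSet Θ)
    (a1 a2 b1 b2 : ℝ)
    (ha2 : 0 ≤ a2) (hb2 : 0 ≤ b2)
    (pr : ℝ → ℝ) (hpr0 : ∀ θ ∈ Θ, 0 ≤ pr θ)
    (hden : ∀ θ ∈ Θ, b1 ≤ (a1 + a2) * pr θ → 0 < a2 * pr θ + b2) :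
    ∀ I : ℝ → ℝ, Measurable I → (∀ θ ∈ Θ, I θ ∈ Set.Icc (0 : ℝ) 1) →
      risk Θ a1 a2 b1 b2 pr (thmOneSol a1 a2 b1 b2 pr)
        ≤ risk Θ a1 a2 b1 b2 pr I := by
  intro I _ hI
  exact setLIntegral_mono' hΘm fun θ hθ => ENNReal.ofReal_le_ofReal <|
    bayesIntegrand_thmOneSol_le ha2 hb2 (hpr0 θ hθ) (hden θ hθ) (hI θ hθ)

/-- Theorem 1 of the paper: the membership function `I_π` of
equation (2) minimizes the Bayes risk among all measurable membership
functions `I : Θ → [0,1]`. -/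
theorem stmt1 (Θ : Set ℝ) (hΘ : Θ.OrdConnected) (hΘm : MeasurableSet Θ)
    (a1 a2 b1 b2 : ℝ)
    (ha1 : 0 ≤ a1) (ha2 : 0 ≤ a2) (hb1 : 0 ≤ b1) (hb2 : 0 ≤ b2)
    (ha : 0 < a1 + a2) (hb : 0 < b1 + b2)
    (pr : ℝ → ℝ) (hprm : Measurable pr) (hpr0 : ∀ θ ∈ Θ, 0 ≤ pr θ)
    (hprdens : ∫⁻ θ in Θ, ENNReal.ofReal (pr θ) = 1)
    (hden : ∀ θ ∈ Θ, b1 ≤ (a1 + a2) * pr θ → 0 < a2 * pr θ + b2) :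
    ∀ I : ℝ → ℝ, Measurable I → (∀ θ ∈ Θ, I θ ∈ Set.Icc (0 : ℝ) 1) →
      risk Θ a1 a2 b1 b2 pr (thmOneSol a1 a2 b1 b2 pr)
        ≤ risk Θ a1 a2 b1 b2 pr I :=
  stmt1_general Θ hΘm a1 a2 b1 b2 ha2 hb2 pr hpr0 hden
end

section
/- Let Θ ⊆ ℝ be an interval, let a₁, a₂, b₁, b₂ ≥ 0 with a₁ + a₂ > 0 and b₂ > 0, let π : Θ → [0,∞) be a measurable probability density, and let I_π be the Theorem-1 solution associated with π. If I : Θ → [0,1] is measurable and R(I) = R(I_π) < ∞, then I(θ) = I_π(θ) for Lebesgue-almost every θ ∈ Θ. (When b₂ > 0 the integrand is strictly convex in the membership value at every θ, so the minimizer is almost-everywhere unique.) -/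
/-!
The risk integrates the pointwise loss `L_p(t)`, a quadratic in the membership value `t` with
leading coefficient `(a₂ p + b₂)/2 > 0`. The Theorem-1 value `s` satisfies the first-order
optimality condition of `L_p` on `[0,1]`, so `L_p(t) ≥ L_p(s) + (a₂ p + b₂)/2 (t - s)²`. Hence
`I` has pointwise loss at least that of `I_π`; equal finite risks force the two losses to agree
almost everywhere, and strictness of the inequality for `t ≠ s` gives `I = I_π` there.
-/

open MeasureTheory

section PointLoss

variable {a1 a2 b1 b2 : ℝ}

noncomputable def pointLoss (a1 a2 b1 b2 p t : ℝ) : ℝ :=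
  (a1 * (1 - t) + a2 / 2 * (1 - t) ^ 2) * p + b1 * t + b2 / 2 * t ^ 2

/-- The derivative of `pointLoss a1 a2 b1 b2 p` at `s`. -/
def pointLossDeriv (a1 a2 b1 b2 p s : ℝ) : ℝ :=
  b1 - (a1 + a2) * p + (a2 * p + b2) * s

theorem risk_eq_lintegral_pointLoss (Θ : Set ℝ) (pr I : ℝ → ℝ) :
    risk Θ a1 a2 b1 b2 pr I = ∫⁻ θ in Θ, ENNReal.ofReal (pointLoss a1 a2 b1 b2 (pr θ) (I θ)) :=
  rfl

theorem pointLoss_sub_pointLoss (p s t : ℝ) :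
    pointLoss a1 a2 b1 b2 p t - pointLoss a1 a2 b1 b2 p s =
      (t - s) * pointLossDeriv a1 a2 b1 b2 p s + (a2 * p + b2) / 2 * (t - s) ^ 2 := by
  unfold pointLoss pointLossDeriv
  ring

theorem pointLoss_nonneg {p t : ℝ} (ha1 : 0 ≤ a1) (ha2 : 0 ≤ a2) (hb1 : 0 ≤ b1) (hb2 : 0 ≤ b2)
    (hp : 0 ≤ p) (ht : t ∈ Set.Icc (0 : ℝ) 1) : 0 ≤ pointLoss a1 a2 b1 b2 p t := by
  obtain ⟨ht0, ht1⟩ := ht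
  have : 0 ≤ 1 - t := sub_nonneg.mpr ht1
  unfold pointLoss
  positivity

theorem thmOneSol_mem_Icc (pr : ℝ → ℝ) {θ : ℝ} (ha2 : 0 ≤ a2) (hb2 : 0 < b2) (hp : 0 ≤ pr θ) :
    thmOneSol a1 a2 b1 b2 pr θ ∈ Set.Icc (0 : ℝ) 1 := by
  have hc : 0 < a2 * pr θ + b2 := by positivity
  unfold thmOneSol
  split_ifs with h0 h1
  · exact ⟨le_rfl, zero_le_one⟩
  · rw [Set.mem_Icc, div_le_one hc]
    exact ⟨div_nonneg (by linarith) hc.le, by linarith⟩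
  · exact ⟨zero_le_one, le_rfl⟩

theorem sub_mul_pointLossDeriv_thmOneSol_nonneg (pr : ℝ → ℝ) {θ t : ℝ} (ha2 : 0 ≤ a2)
    (hb2 : 0 < b2) (hp : 0 ≤ pr θ) (ht : t ∈ Set.Icc (0 : ℝ) 1) :
    0 ≤ (t - thmOneSol a1 a2 b1 b2 pr θ) *
      pointLossDeriv a1 a2 b1 b2 (pr θ) (thmOneSol a1 a2 b1 b2 pr θ) := by
  have hc : 0 < a2 * pr θ + b2 := by positivity
  unfold thmOneSol pointLossDeriv
  split_ifs with h0 h1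
  · exact mul_nonneg (by linarith [ht.1]) (by linarith)
  · rw [mul_div_cancel₀ _ hc.ne']
    simp
  · exact mul_nonneg_of_nonpos_of_nonpos (by linarith [ht.2]) (by linarith)

theorem pointLoss_thmOneSol_lt (pr : ℝ → ℝ) {θ t : ℝ} (ha2 : 0 ≤ a2) (hb2 : 0 < b2)
    (hp : 0 ≤ pr θ) (ht : t ∈ Set.Icc (0 : ℝ) 1) (hne : t ≠ thmOneSol a1 a2 b1 b2 pr θ) :
    pointLoss a1 a2 b1 b2 (pr θ) (thmOneSol a1 a2 b1 b2 pr θ) <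
      pointLoss a1 a2 b1 b2 (pr θ) t := by
  have hc : 0 < (a2 * pr θ + b2) / 2 := by positivity
  have hsq : 0 < (t - thmOneSol a1 a2 b1 b2 pr θ) ^ 2 := sq_pos_of_ne_zero (sub_ne_zero.mpr hne)
  have hfirst := sub_mul_pointLossDeriv_thmOneSol_nonneg (a1 := a1) (b1 := b1) pr ha2 hb2 hp ht
  have htaylor := pointLoss_sub_pointLoss (a1 := a1) (a2 := a2) (b1 := b1) (b2 := b2) (pr θ)
    (thmOneSol a1 a2 b1 b2 pr θ) t
  linarith [mul_pos hc hsq]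

theorem pointLoss_thmOneSol_le (pr : ℝ → ℝ) {θ t : ℝ} (ha2 : 0 ≤ a2) (hb2 : 0 < b2)
    (hp : 0 ≤ pr θ) (ht : t ∈ Set.Icc (0 : ℝ) 1) :
    pointLoss a1 a2 b1 b2 (pr θ) (thmOneSol a1 a2 b1 b2 pr θ) ≤
      pointLoss a1 a2 b1 b2 (pr θ) t := by
  rcases eq_or_ne t (thmOneSol a1 a2 b1 b2 pr θ) with rfl | hne
  · exact le_rfl
  · exact (pointLoss_thmOneSol_lt pr ha2 hb2 hp ht hne).le

end PointLoss

theorem stmt2_general (Θ : Set ℝ) (hΘm : MeasurableSet Θ)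
    (a1 a2 b1 b2 : ℝ)
    (ha1 : 0 ≤ a1) (ha2 : 0 ≤ a2) (hb1 : 0 ≤ b1) (hb2 : 0 < b2)
    (pr : ℝ → ℝ) (hprm : Measurable pr) (hpr0 : ∀ θ ∈ Θ, 0 ≤ pr θ)
    (I : ℝ → ℝ) (hIm : Measurable I) (hI01 : ∀ θ ∈ Θ, I θ ∈ Set.Icc (0 : ℝ) 1)
    (heq : risk Θ a1 a2 b1 b2 pr I = risk Θ a1 a2 b1 b2 pr (thmOneSol a1 a2 b1 b2 pr))
    (hfin : risk Θ a1 a2 b1 b2 pr (thmOneSol a1 a2 b1 b2 pr) < ⊤) :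
    ∀ᵐ θ ∂(volume.restrict Θ), I θ = thmOneSol a1 a2 b1 b2 pr θ := by
  simp only [risk_eq_lintegral_pointLoss] at heq hfin
  have hle : ∀ᵐ θ ∂(volume.restrict Θ),
      ENNReal.ofReal (pointLoss a1 a2 b1 b2 (pr θ) (thmOneSol a1 a2 b1 b2 pr θ)) ≤
      ENNReal.ofReal (pointLoss a1 a2 b1 b2 (pr θ) (I θ)) :=
    ae_restrict_of_forall_mem hΘm fun θ hθ =>
      ENNReal.ofReal_le_ofReal (pointLoss_thmOneSol_le pr ha2 hb2 (hpr0 θ hθ) (hI01 θ hθ))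
  have hloss_ae := ae_eq_of_ae_le_of_lintegral_le hle hfin.ne
    (by unfold pointLoss; fun_prop) heq.le
  filter_upwards [hloss_ae, ae_restrict_mem hΘm] with θ hloss hθ
  by_contra hne
  refine ((ENNReal.ofReal_lt_ofReal_iff_of_nonneg ?_).mpr
    (pointLoss_thmOneSol_lt pr ha2 hb2 (hpr0 θ hθ) (hI01 θ hθ) hne)).ne hloss
  exact pointLoss_nonneg ha1 ha2 hb1 hb2.le (hpr0 θ hθ) (thmOneSol_mem_Icc pr ha2 hb2 (hpr0 θ hθ))

/-- when `b₂ > 0` the minimizer of the risk is unique up to a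
Lebesgue-null set: any measurable membership function achieving the (finite)
minimal risk agrees with the Theorem-1 solution almost everywhere on `Θ`. -/
theorem stmt2 (Θ : Set ℝ) (hΘ : Θ.OrdConnected) (hΘm : MeasurableSet Θ)
    (a1 a2 b1 b2 : ℝ)
    (ha1 : 0 ≤ a1) (ha2 : 0 ≤ a2) (hb1 : 0 ≤ b1) (hb2 : 0 < b2)
    (ha : 0 < a1 + a2)
    (pr : ℝ → ℝ) (hprm : Measurable pr) (hpr0 : ∀ θ ∈ Θ, 0 ≤ pr θ)
    (hprdens : ∫⁻ θ in Θ, ENNReal.ofReal (pr θ) = 1)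
    (I : ℝ → ℝ) (hIm : Measurable I) (hI01 : ∀ θ ∈ Θ, I θ ∈ Set.Icc (0 : ℝ) 1)
    (heq : risk Θ a1 a2 b1 b2 pr I = risk Θ a1 a2 b1 b2 pr (thmOneSol a1 a2 b1 b2 pr))
    (hfin : risk Θ a1 a2 b1 b2 pr (thmOneSol a1 a2 b1 b2 pr) < ⊤) :
    ∀ᵐ θ ∂(volume.restrict Θ), I θ = thmOneSol a1 a2 b1 b2 pr θ :=
  stmt2_general Θ hΘm a1 a2 b1 b2 ha1 ha2 hb1 hb2 pr hprm hpr0 I hIm hI01 heq hfin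
end

section
/- Let Θ ⊆ ℝ be a bounded interval of length ℓ > 0, let I_A : Θ → [0,1] be measurable with ∫_Θ I_A(θ) dθ > 0, let 0 ≤ r₁ < 1/ℓ, and let r₂ = r₁ + (1 − r₁ℓ)/∫_Θ I_A be the unique value making π_{A,r₁}(θ) = (r₂ − r₁)I_A(θ) + r₁ a probability density on Θ. Then, with a₂ = 0 and any a₁ > 0, b₁ ≥ 0, b₂ > 0 satisfying b₁/a₁ = r₁ and (b₁+b₂)/a₁ = r₂ (for instance a₁ = b₂/(r₂−r₁) and b₁ = r₁b₂/(r₂−r₁) for any b₂ > 0), the Theorem-1 solution associated with π_{A,r₁} equals I_A at every θ ∈ Θ. -/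
open MeasureTheory

noncomputable def rampMembership (r1 r2 p : ℝ) : ℝ :=
  if p < r1 then 0 else if p ≤ r2 then (p - r1) / (r2 - r1) else 1

theorem thmOneSol_zero_eq_rampMembership {a1 b1 b2 : ℝ} (ha1 : 0 < a1) (pr : ℝ → ℝ) (θ : ℝ) :
    thmOneSol a1 0 b1 b2 pr θ = rampMembership (b1 / a1) ((b1 + b2) / a1) (pr θ) := by
  have hmid : (a1 * pr θ - b1) / b2 = (pr θ - b1 / a1) / ((b1 + b2) / a1 - b1 / a1) := by
    field_simp
    ring
  simp only [thmOneSol, rampMembership, add_zero, zero_mul, zero_add, lt_div_iff₀ ha1,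
    le_div_iff₀ ha1, mul_comm (pr θ) a1, hmid]

theorem rampMembership_affine {r1 r2 x : ℝ} (hr : r1 < r2) (hx : x ∈ Set.Icc (0 : ℝ) 1) :
    rampMembership r1 r2 ((r2 - r1) * x + r1) = x := by
  have hlow : ¬ (r2 - r1) * x + r1 < r1 := by nlinarith [hx.1]
  have hhigh : (r2 - r1) * x + r1 ≤ r2 := by nlinarith [hx.2]
  rw [rampMembership, if_neg hlow, if_pos hhigh, add_sub_cancel_right,
    mul_div_cancel_left₀ _ (sub_ne_zero.mpr hr.ne')]

theorem stmt10_general (Θ : Set ℝ)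
    (IA : ℝ → ℝ)
    (hIA01 : ∀ θ ∈ Θ, IA θ ∈ Set.Icc (0 : ℝ) 1)
    (r1 r2 : ℝ)
    (a1 b1 b2 : ℝ) (ha1 : 0 < a1) (hb2 : 0 < b2)
    (hra : b1 / a1 = r1) (hrb : (b1 + b2) / a1 = r2) :
    ∀ θ ∈ Θ, thmOneSol a1 0 b1 b2 (fun u => (r2 - r1) * IA u + r1) θ = IA θ := by
  intro θ hθ
  have hr : r1 < r2 := by
    rw [← hra, ← hrb]
    exact div_lt_div_of_pos_right (by linarith) ha1
  rw [thmOneSol_zero_eq_rampMembership ha1, hra, hrb]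
  exact rampMembership_affine hr (hIA01 θ hθ)

/-- with `a₂ = 0`, `r₁ = b₁/a₁`, `r₂ = (b₁+b₂)/a₁` and
`r₂ = r₁ + (1 − r₁ℓ)/∫_Θ I_A`, the Theorem-1 solution associated with the
prior `π_{A,r₁}(θ) = (r₂ − r₁) I_A(θ) + r₁` is exactly `I_A` on `Θ`. -/
theorem stmt10 (Θ : Set ℝ) (hΘ : Θ.OrdConnected) (hΘm : MeasurableSet Θ)
    (ℓ : ℝ) (hℓ : 0 < ℓ) (hvol : volume Θ = ENNReal.ofReal ℓ)
    (IA : ℝ → ℝ) (hIAm : Measurable IA)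
    (hIA01 : ∀ θ ∈ Θ, IA θ ∈ Set.Icc (0 : ℝ) 1)
    (hIApos : 0 < ∫ θ in Θ, IA θ)
    (r1 r2 : ℝ) (hr1 : 0 ≤ r1) (hr1ℓ : r1 < 1 / ℓ)
    (hr2 : r2 = r1 + (1 - r1 * ℓ) / ∫ θ in Θ, IA θ)
    (a1 b1 b2 : ℝ) (ha1 : 0 < a1) (hb1 : 0 ≤ b1) (hb2 : 0 < b2)
    (hra : b1 / a1 = r1) (hrb : (b1 + b2) / a1 = r2) :
    ∀ θ ∈ Θ, thmOneSol a1 0 b1 b2 (fun u => (r2 - r1) * IA u + r1) θ = IA θ :=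
  stmt10_general Θ IA hIA01 r1 r2 a1 b1 b2 ha1 hb2 hra hrb
end

section
/- Let Θ ⊆ ℝ be a bounded interval of length ℓ > 0, let I_A : Θ → [0,1] be measurable with ∫_Θ I_A > 0, let 0 < r₁ < 1/ℓ, and let r₂ = r₁ + (1 − r₁ℓ)/∫_Θ I_A, π_{A,r₁}(θ) = (r₂ − r₁)I_A(θ) + r₁. Suppose the sets {θ : I_A(θ) = 0} and {θ : I_A(θ) = 1} each have positive Lebesgue measure. Then π_{A,r₁} is not the unique prior whose Theorem-1 solution (with a₂ = 0, r₁ = b₁/a₁, r₂ = (b₁+b₂)/a₁) equals I_A: there exists a measurable probability density π on Θ with π ≠ π_{A,r₁} on a set of positive Lebesgue measure such that the Theorem-1 solution associated with π equals I_A at every θ ∈ Θ. -/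
open MeasureTheory

section ThmOneSol

variable {a1 b1 b2 r1 r2 : ℝ} {pr : ℝ → ℝ} {θ : ℝ}

lemma thmOneSol_zero_eq_zero_of_lt (ha1 : 0 < a1) (h : pr θ < b1 / a1) :
    thmOneSol a1 0 b1 b2 pr θ = 0 := by
  rw [lt_div_iff₀ ha1, mul_comm] at h
  simp [thmOneSol, h]

lemma thmOneSol_zero_eq_one_of_gt (ha1 : 0 < a1) (hb2 : 0 ≤ b2) (h : (b1 + b2) / a1 < pr θ) :
    thmOneSol a1 0 b1 b2 pr θ = 1 := by
  rw [div_lt_iff₀ ha1] at h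
  have h1 : ¬ a1 * pr θ < b1 := by nlinarith
  have h2 : ¬ a1 * pr θ ≤ b1 + b2 := by linarith
  simp [thmOneSol, h1, h2]

lemma thmOneSol_zero_eq_of_eq_affine (ha1 : 0 < a1) (hra : b1 / a1 = r1)
    (hrb : (b1 + b2) / a1 = r2) (hr : r1 < r2) {x : ℝ} (hx : x ∈ Set.Icc (0 : ℝ) 1)
    (hpr : pr θ = (r2 - r1) * x + r1) : thmOneSol a1 0 b1 b2 pr θ = x := by
  obtain ⟨hx0, hx1⟩ := hx
  rw [div_eq_iff ha1.ne'] at hra hrb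
  have hlo : 0 ≤ a1 * ((r2 - r1) * x) := by have := hr.le; positivity
  have hhi : 0 ≤ a1 * ((r2 - r1) * (1 - x)) := by
    have := hr.le; have : 0 ≤ 1 - x := by linarith
    positivity
  have h1 : ¬ a1 * pr θ < b1 := by rw [hpr]; linarith
  have h2 : a1 * pr θ ≤ b1 + b2 := by rw [hpr]; linarith
  have hb2 : b2 ≠ 0 := by nlinarith
  simp only [thmOneSol, add_zero, zero_mul, zero_add, if_neg h1, if_pos h2]
  rw [div_eq_iff hb2, hpr]
  linear_combination (x - 1) * hra - x * hrb

end ThmOneSol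

lemma measureReal_restrict_pos {α : Type*} [MeasurableSpace α] {μ : Measure α} {s t : Set α}
    [IsFiniteMeasure (μ.restrict s)] (ht : MeasurableSet t) (h : 0 < μ (s ∩ t)) :
    0 < (μ.restrict s).real t := by
  refine ENNReal.toReal_pos ?_ (measure_ne_top _ _)
  rw [Measure.restrict_apply ht, Set.inter_comm]
  exact h.ne'

section MassTransfer

variable {α : Type*} [MeasurableSpace α]

/-- Removes mass `ε` per unit measure on `s` and spreads the same total mass uniformly on `t`. -/
noncomputable def massTransfer (μ : Measure α) (s t : Set α) (ε : ℝ) : α → ℝ :=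
  t.indicator (fun _ => ε * μ.real s / μ.real t) - s.indicator (fun _ => ε)

variable {μ : Measure α} {s t : Set α} {ε : ℝ} {x : α}

lemma measurable_massTransfer (hs : MeasurableSet s) (ht : MeasurableSet t) :
    Measurable (massTransfer μ s t ε) :=
  (measurable_const.indicator ht).sub (measurable_const.indicator hs)

lemma integrable_massTransfer [IsFiniteMeasure μ] (hs : MeasurableSet s) (ht : MeasurableSet t) :
    Integrable (massTransfer μ s t ε) μ :=
  ((integrable_const _).indicator ht).sub ((integrable_const _).indicator hs)

lemma integral_massTransfer [IsFiniteMeasure μ] (hs : MeasurableSet s) (ht : MeasurableSet t)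
    (hμt : μ.real t ≠ 0) : ∫ x, massTransfer μ s t ε x ∂μ = 0 := by
  simp only [massTransfer, Pi.sub_apply]
  rw [integral_sub ((integrable_const _).indicator ht)
    ((integrable_const _).indicator hs), integral_indicator_const _ ht,
    integral_indicator_const _ hs, smul_eq_mul, smul_eq_mul]
  field_simp
  ring

lemma massTransfer_of_mem_left (hst : Disjoint s t) (hx : x ∈ s) :
    massTransfer μ s t ε x = -ε := by
  simp [massTransfer, hx, Set.disjoint_left.mp hst hx]

lemma massTransfer_of_mem_right (hst : Disjoint s t) (hx : x ∈ t) :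
    massTransfer μ s t ε x = ε * μ.real s / μ.real t := by
  simp [massTransfer, hx, Set.disjoint_right.mp hst hx]

lemma massTransfer_of_notMem (hs : x ∉ s) (ht : x ∉ t) : massTransfer μ s t ε x = 0 := by
  simp [massTransfer, hs, ht]

end MassTransfer

section ShiftedPrior

/-- `π_{A,r₁}` with all its mass on `{I_A = 0}` moved, uniformly with respect to `μ`,
onto `{I_A = 1}`. -/
noncomputable def shiftedPrior (μ : Measure ℝ) (IA : ℝ → ℝ) (r1 r2 : ℝ) (θ : ℝ) : ℝ :=
  (r2 - r1) * IA θ + r1 + massTransfer μ {θ | IA θ = 0} {θ | IA θ = 1} r1 θ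

variable {μ : Measure ℝ} {IA : ℝ → ℝ} {r1 r2 θ : ℝ}

lemma disjoint_setOf_eq_zero_setOf_eq_one (f : ℝ → ℝ) : Disjoint {θ | f θ = 0} {θ | f θ = 1} :=
  (Set.disjoint_singleton.2 zero_ne_one).preimage f

lemma shiftedPrior_of_eq_zero (h0 : IA θ = 0) : shiftedPrior μ IA r1 r2 θ = 0 := by
  simp [shiftedPrior, massTransfer_of_mem_left (disjoint_setOf_eq_zero_setOf_eq_one IA)
    (show θ ∈ {θ | IA θ = 0} from h0), h0]

lemma shiftedPrior_of_eq_one (h1 : IA θ = 1) :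
    shiftedPrior μ IA r1 r2 θ = r2 + r1 * μ.real {θ | IA θ = 0} / μ.real {θ | IA θ = 1} := by
  simp [shiftedPrior, massTransfer_of_mem_right (disjoint_setOf_eq_zero_setOf_eq_one IA)
    (show θ ∈ {θ | IA θ = 1} from h1), h1]

lemma shiftedPrior_of_ne (h0 : IA θ ≠ 0) (h1 : IA θ ≠ 1) :
    shiftedPrior μ IA r1 r2 θ = (r2 - r1) * IA θ + r1 := by
  simp [shiftedPrior, massTransfer_of_notMem (μ := μ) (ε := r1)
    (show θ ∉ {θ | IA θ = 0} from h0) (show θ ∉ {θ | IA θ = 1} from h1)]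

lemma measurable_shiftedPrior (hIA : Measurable IA) : Measurable (shiftedPrior μ IA r1 r2) :=
  ((measurable_const.mul hIA).add measurable_const).add
    (measurable_massTransfer (hIA (measurableSet_singleton 0)) (hIA (measurableSet_singleton 1)))

lemma shiftedPrior_nonneg (hr1 : 0 ≤ r1) (hr : r1 ≤ r2) (hx : 0 ≤ IA θ) :
    0 ≤ shiftedPrior μ IA r1 r2 θ := by
  rcases eq_or_ne (IA θ) 0 with h0 | h0
  · exact (shiftedPrior_of_eq_zero h0).ge
  rcases eq_or_ne (IA θ) 1 with h1 | h1
  · rw [shiftedPrior_of_eq_one h1]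
    have := hr1.trans hr
    positivity
  · rw [shiftedPrior_of_ne h0 h1]
    have := sub_nonneg.2 hr
    positivity

lemma integral_shiftedPrior [IsFiniteMeasure μ] (hIA : Measurable IA)
    (hμ1 : μ.real {θ | IA θ = 1} ≠ 0) (hint : ∫ θ, IA θ ∂μ ≠ 0)
    (hr2 : r2 = r1 + (1 - r1 * μ.real Set.univ) / ∫ θ, IA θ ∂μ) :
    ∫ θ, shiftedPrior μ IA r1 r2 θ ∂μ = 1 := by
  have hS0 : MeasurableSet {θ | IA θ = 0} := hIA (measurableSet_singleton 0)
  have hS1 : MeasurableSet {θ | IA θ = 1} := hIA (measurableSet_singleton 1)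
  have hIAint : Integrable IA μ := Integrable.of_integral_ne_zero hint
  have hπA : Integrable (fun θ => (r2 - r1) * IA θ + r1) μ :=
    (hIAint.const_mul _).add (integrable_const _)
  simp only [shiftedPrior]
  rw [integral_add hπA (integrable_massTransfer hS0 hS1), integral_massTransfer hS0 hS1 hμ1,
    integral_add (hIAint.const_mul _) (integrable_const _), integral_const_mul,
    integral_const, smul_eq_mul, hr2]
  field_simp
  ring

lemma thmOneSol_shiftedPrior {a1 b1 b2 : ℝ} (ha1 : 0 < a1) (hb2 : 0 ≤ b2)
    (hra : b1 / a1 = r1) (hrb : (b1 + b2) / a1 = r2) (hr1 : 0 < r1) (hr : r1 < r2)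
    (hμ0 : 0 < μ.real {θ | IA θ = 0}) (hμ1 : 0 < μ.real {θ | IA θ = 1})
    (hx : IA θ ∈ Set.Icc (0 : ℝ) 1) :
    thmOneSol a1 0 b1 b2 (shiftedPrior μ IA r1 r2) θ = IA θ := by
  rcases eq_or_ne (IA θ) 0 with h0 | h0
  · rw [h0]
    exact thmOneSol_zero_eq_zero_of_lt ha1 (by rw [shiftedPrior_of_eq_zero h0, hra]; exact hr1)
  rcases eq_or_ne (IA θ) 1 with h1 | h1
  · rw [h1]
    apply thmOneSol_zero_eq_one_of_gt ha1 hb2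
    rw [hrb, shiftedPrior_of_eq_one h1]
    linarith [div_pos (mul_pos hr1 hμ0) hμ1]
  · exact thmOneSol_zero_eq_of_eq_affine ha1 hra hrb hr hx (shiftedPrior_of_ne h0 h1)

end ShiftedPrior

theorem stmt12_general (Θ : Set ℝ)
    (ℓ : ℝ) (hℓ : 0 < ℓ) (hvol : volume Θ = ENNReal.ofReal ℓ)
    (IA : ℝ → ℝ) (hIAm : Measurable IA)
    (hIA01 : ∀ θ ∈ Θ, IA θ ∈ Set.Icc (0 : ℝ) 1)
    (hIApos : 0 < ∫ θ in Θ, IA θ)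
    (r1 r2 : ℝ) (hr1 : 0 < r1) (hr1ℓ : r1 < 1 / ℓ)
    (hr2 : r2 = r1 + (1 - r1 * ℓ) / ∫ θ in Θ, IA θ)
    (a1 b1 b2 : ℝ) (ha1 : 0 < a1) (hb2 : 0 < b2)
    (hra : b1 / a1 = r1) (hrb : (b1 + b2) / a1 = r2)
    (hzero : 0 < volume {θ ∈ Θ | IA θ = 0})
    (hone : 0 < volume {θ ∈ Θ | IA θ = 1}) :
    ∃ pr : ℝ → ℝ, Measurable pr ∧ (∀ θ ∈ Θ, 0 ≤ pr θ) ∧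
      (∫ θ in Θ, pr θ) = 1 ∧
      0 < volume {θ ∈ Θ | pr θ ≠ (r2 - r1) * IA θ + r1} ∧
      ∀ θ ∈ Θ, thmOneSol a1 0 b1 b2 pr θ = IA θ := by
  have : IsFiniteMeasure (volume.restrict Θ) := isFiniteMeasure_restrict.mpr (by simp [hvol])
  have hμ : ∀ c, 0 < volume {θ ∈ Θ | IA θ = c} →
      0 < (volume.restrict Θ).real {θ | IA θ = c} := fun c hc =>
    measureReal_restrict_pos (hIAm (measurableSet_singleton c)) hc
  have hℓ' : (volume.restrict Θ).real Set.univ = ℓ := by simp [measureReal_def, hvol, hℓ.le]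
  have hr12 : r1 < r2 := by
    have : r1 * ℓ < 1 := (lt_div_iff₀ hℓ).mp hr1ℓ
    rw [hr2]
    linarith [div_pos (sub_pos.mpr this) hIApos]
  refine ⟨shiftedPrior (volume.restrict Θ) IA r1 r2, measurable_shiftedPrior hIAm,
    fun θ hθ => shiftedPrior_nonneg hr1.le hr12.le (hIA01 θ hθ).1,
    integral_shiftedPrior hIAm (hμ 1 hone).ne' hIApos.ne' (by rwa [hℓ']), ?_,
    fun θ hθ => thmOneSol_shiftedPrior ha1 hb2.le hra hrb hr1 hr12 (hμ 0 hzero) (hμ 1 hone)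
      (hIA01 θ hθ)⟩
  refine hzero.trans_le (measure_mono fun θ ⟨hθ, h0⟩ => ⟨hθ, ?_⟩)
  rw [shiftedPrior_of_eq_zero h0, h0]
  simpa using hr1.ne

/-- if the sets `{I_A = 0}` and `{I_A = 1}` both have positive
Lebesgue measure (and `0 < r₁`), then `π_{A,r₁}` is not the unique prior whose
Theorem-1 solution equals `I_A`: there is a probability density `π` differing
from `π_{A,r₁}` on a set of positive measure whose Theorem-1 solution is also
`I_A` everywhere on `Θ`. -/
theorem stmt12 (Θ : Set ℝ) (hΘ : Θ.OrdConnected) (hΘm : MeasurableSet Θ)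
    (ℓ : ℝ) (hℓ : 0 < ℓ) (hvol : volume Θ = ENNReal.ofReal ℓ)
    (IA : ℝ → ℝ) (hIAm : Measurable IA)
    (hIA01 : ∀ θ ∈ Θ, IA θ ∈ Set.Icc (0 : ℝ) 1)
    (hIApos : 0 < ∫ θ in Θ, IA θ)
    (r1 r2 : ℝ) (hr1 : 0 < r1) (hr1ℓ : r1 < 1 / ℓ)
    (hr2 : r2 = r1 + (1 - r1 * ℓ) / ∫ θ in Θ, IA θ)
    (a1 b1 b2 : ℝ) (ha1 : 0 < a1) (hb1 : 0 ≤ b1) (hb2 : 0 < b2)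
    (hra : b1 / a1 = r1) (hrb : (b1 + b2) / a1 = r2)
    (hzero : 0 < volume {θ ∈ Θ | IA θ = 0})
    (hone : 0 < volume {θ ∈ Θ | IA θ = 1}) :
    ∃ pr : ℝ → ℝ, Measurable pr ∧ (∀ θ ∈ Θ, 0 ≤ pr θ) ∧
      (∫ θ in Θ, pr θ) = 1 ∧
      0 < volume {θ ∈ Θ | pr θ ≠ (r2 - r1) * IA θ + r1} ∧
      ∀ θ ∈ Θ, thmOneSol a1 0 b1 b2 pr θ = IA θ :=
  stmt12_general Θ ℓ hℓ hvol IA hIAm hIA01 hIApos r1 r2 hr1 hr1ℓ hr2 a1 b1 b2 ha1 hb2 hra hrb hzero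
    hone
end

section
/- Let Θ = [0,1], let a₁, a₂ > 0 and b₁ ≥ 0, b₂ > 0, and let I_A : [0,1] → (0,1) be measurable with 0 < I_A(θ) < 1 for all θ. Suppose π and π′ are measurable probability densities on [0,1] whose Theorem-1 solutions (for the parameters a₁, a₂, b₁, b₂) both equal I_A at every θ. Then π(θ) = π′(θ) = (b₁ + b₂ I_A(θ))/(a₁ + a₂(1 − I_A(θ))) for every θ ∈ [0,1]. That is, when the membership function never takes the values 0 or 1, the prior whose Theorem-1 solution is I_A is unique. -/
open MeasureTheory

/- A value of `I_π` strictly between 0 and 1 can only come from the middle branch, and there the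
fractional-linear map `p ↦ ((a₁ + a₂) p − b₁) / (a₂ p + b₂)` is inverted pointwise. Its
denominator is nonzero because `x / 0 = 0 ≠ t`, and that of the inverse because `b₁ + b₂ t > 0`. -/

lemma eq_div_of_membership_formula_eq {a1 a2 b1 b2 p t : ℝ} (ht : t ≠ 0)
    (hnum : 0 < b1 + b2 * t) (h : ((a1 + a2) * p - b1) / (a2 * p + b2) = t) :
    p = (b1 + b2 * t) / (a1 + a2 * (1 - t)) := by
  have hden : a2 * p + b2 ≠ 0 := by
    rintro hzero
    rw [hzero, div_zero] at h
    exact ht h.symm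
  have hlin : p * (a1 + a2 * (1 - t)) = b1 + b2 * t := by
    rw [div_eq_iff hden] at h
    linarith
  have hD : a1 + a2 * (1 - t) ≠ 0 := by
    rintro hzero
    rw [hzero, mul_zero] at hlin
    linarith
  exact eq_div_of_mul_eq hD hlin

lemma eq_div_of_thmOneSol_eq {a1 a2 b1 b2 : ℝ} {pr : ℝ → ℝ} {θ t : ℝ}
    (hb1 : 0 ≤ b1) (hb2 : 0 < b2) (ht : t ∈ Set.Ioo (0 : ℝ) 1)
    (h : thmOneSol a1 a2 b1 b2 pr θ = t) :
    pr θ = (b1 + b2 * t) / (a1 + a2 * (1 - t)) := by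
  obtain ⟨ht0, ht1⟩ := ht
  unfold thmOneSol at h
  split_ifs at h
  · exact absurd h ht0.ne
  · exact eq_div_of_membership_formula_eq ht0.ne' (by positivity) h
  · exact absurd h ht1.ne'

theorem stmt14_general (a1 a2 b1 b2 : ℝ)
    (hb1 : 0 ≤ b1) (hb2 : 0 < b2)
    (IA : ℝ → ℝ)
    (hIA : ∀ θ ∈ Set.Icc (0 : ℝ) 1, IA θ ∈ Set.Ioo (0 : ℝ) 1)
    (pr pr' : ℝ → ℝ)
    (hsol : ∀ θ ∈ Set.Icc (0 : ℝ) 1, thmOneSol a1 a2 b1 b2 pr θ = IA θ)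
    (hsol' : ∀ θ ∈ Set.Icc (0 : ℝ) 1, thmOneSol a1 a2 b1 b2 pr' θ = IA θ) :
    ∀ θ ∈ Set.Icc (0 : ℝ) 1,
      pr θ = (b1 + b2 * IA θ) / (a1 + a2 * (1 - IA θ)) ∧
      pr' θ = (b1 + b2 * IA θ) / (a1 + a2 * (1 - IA θ)) := by
  intro θ hθ
  exact ⟨eq_div_of_thmOneSol_eq hb1 hb2 (hIA θ hθ) (hsol θ hθ),
    eq_div_of_thmOneSol_eq hb1 hb2 (hIA θ hθ) (hsol' θ hθ)⟩

/-- when the membership function `I_A` never takes the values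
0 or 1, the prior on `[0,1]` whose Theorem-1 solution is `I_A` is unique:
any two such priors both equal `(b₁ + b₂ I_A(θ))/(a₁ + a₂(1 − I_A(θ)))`
everywhere on `[0,1]`. -/
theorem stmt14 (a1 a2 b1 b2 : ℝ)
    (ha1 : 0 < a1) (ha2 : 0 < a2) (hb1 : 0 ≤ b1) (hb2 : 0 < b2)
    (IA : ℝ → ℝ) (hIAm : Measurable IA)
    (hIA : ∀ θ ∈ Set.Icc (0 : ℝ) 1, IA θ ∈ Set.Ioo (0 : ℝ) 1)
    (pr pr' : ℝ → ℝ)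
    (hprm : Measurable pr) (hpr0 : ∀ θ ∈ Set.Icc (0 : ℝ) 1, 0 ≤ pr θ)
    (hprdens : (∫ θ in Set.Icc (0 : ℝ) 1, pr θ) = 1)
    (hprm' : Measurable pr') (hpr0' : ∀ θ ∈ Set.Icc (0 : ℝ) 1, 0 ≤ pr' θ)
    (hprdens' : (∫ θ in Set.Icc (0 : ℝ) 1, pr' θ) = 1)
    (hsol : ∀ θ ∈ Set.Icc (0 : ℝ) 1, thmOneSol a1 a2 b1 b2 pr θ = IA θ)
    (hsol' : ∀ θ ∈ Set.Icc (0 : ℝ) 1, thmOneSol a1 a2 b1 b2 pr' θ = IA θ) :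
    ∀ θ ∈ Set.Icc (0 : ℝ) 1,
      pr θ = (b1 + b2 * IA θ) / (a1 + a2 * (1 - IA θ)) ∧
      pr' θ = (b1 + b2 * IA θ) / (a1 + a2 * (1 - IA θ)) :=
  stmt14_general a1 a2 b1 b2 hb1 hb2 IA hIA pr pr' hsol hsol'
end

section
/- Let Θ = ℝ and fix a₁ = a₂ = b₁ = b₂ = 1. Let I_A : ℝ → [0,1] be the constant function I_A(θ) = 1/2. Then there is no measurable probability density π : ℝ → [0,∞) whose Theorem-1 solution (for these parameters) equals I_A at every θ. (Indeed, equation (3) would force π to be a positive constant on all of ℝ, which is not integrable.) Hence the answer to the paper's first question is no: for a specified membership function and a specified loss function, a prior density yielding that membership function as the solution need not exist. -/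
open MeasureTheory

/- Equation (3): strictly between 0 and 1 the membership value lies in the middle branch, whose
formula can be solved for the prior. Both denominators are nonzero there, since a vanishing
denominator would force the membership value to be 0. -/
theorem prior_eq_of_thmOneSol_mem_Ioo {a1 a2 b1 b2 : ℝ} {pr : ℝ → ℝ} {θ : ℝ}
    (ha1 : 0 ≤ a1) (ha2 : 0 ≤ a2) (hb1 : 0 ≤ b1)
    (hI : thmOneSol a1 a2 b1 b2 pr θ ∈ Set.Ioo 0 1) :
    pr θ = (b1 + b2 * thmOneSol a1 a2 b1 b2 pr θ) /
      (a1 + a2 * (1 - thmOneSol a1 a2 b1 b2 pr θ)) := by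
  set I := thmOneSol a1 a2 b1 b2 pr θ with hI_def
  obtain ⟨hI0, hI1⟩ := hI
  have hmid : ¬ (a1 + a2) * pr θ < b1 ∧ I = ((a1 + a2) * pr θ - b1) / (a2 * pr θ + b2) := by
    unfold thmOneSol at hI_def
    split_ifs at hI_def with hlow hhigh <;> simp_all
  obtain ⟨hlow, hI_eq⟩ := hmid
  have hden : a2 * pr θ + b2 ≠ 0 := by
    intro h
    rw [h, div_zero] at hI_eq
    exact hI0.ne' hI_eq
  have hcross : I * (a2 * pr θ + b2) = (a1 + a2) * pr θ - b1 := by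
    rw [hI_eq, div_mul_cancel₀ _ hden]
  have hden' : a1 + a2 * (1 - I) ≠ 0 := by
    intro h
    have ha1' : a1 = 0 := by nlinarith
    have ha2' : a2 = 0 := by nlinarith
    subst ha1' ha2'
    have hb1' : b1 = 0 := by linarith [not_lt.mp hlow]
    rw [hb1', zero_add, zero_mul, sub_zero, zero_div] at hI_eq
    exact hI0.ne' hI_eq
  rw [eq_div_iff hden']
  linarith

/-- on `Θ = ℝ` with `a₁ = a₂ = b₁ = b₂ = 1`, no probability
density has the constant membership function `1/2` as its Theorem-1 solution
(equation (3) would force the prior to be a positive constant on all of `ℝ`,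
which cannot integrate to one). -/
theorem stmt15 :
    ¬ ∃ pr : ℝ → ℝ, Measurable pr ∧ (∀ θ : ℝ, 0 ≤ pr θ) ∧
      (∫⁻ θ : ℝ, ENNReal.ofReal (pr θ)) = 1 ∧
      ∀ θ : ℝ, thmOneSol 1 1 1 1 pr θ = 1 / 2 := by
  rintro ⟨pr, -, -, hint, hsol⟩
  have hone : ∀ θ, pr θ = 1 := fun θ => by
    have h := prior_eq_of_thmOneSol_mem_Ioo (pr := pr) (θ := θ) (b2 := 1)
      zero_le_one zero_le_one zero_le_one (by rw [hsol θ]; norm_num)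
    rw [h, hsol θ]
    norm_num
  have htop : (∫⁻ θ : ℝ, ENNReal.ofReal (pr θ)) = ⊤ := by
    simp [hone, lintegral_const]
  exact ENNReal.top_ne_one (htop ▸ hint)
end

section
/- Let Θ be an unbounded interval of ℝ (infinite Lebesgue measure), let I_A : Θ → [0,1] be an integrable membership function with ∫_Θ I_A(θ) dθ > 0, and suppose I_A(θ) < 1 for all θ. Set a₁ = 1, a₂ = 0, b₁ = 0, and b₂ = 1/∫_Θ I_A(θ) dθ > 0. Then π(θ) = b₂ · I_A(θ) is a probability density on Θ whose Theorem-1 solution (for these parameters) equals I_A at every θ with I_A(θ) < 1; in particular, for every integrable membership function there exist a loss function and a prior density realizing it (answering the paper's second question affirmatively). -/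
open MeasureTheory

theorem thmOneSol_of_mem_Icc {a1 b1 b2 : ℝ} {pr : ℝ → ℝ} {θ : ℝ}
    (h : a1 * pr θ ∈ Set.Icc b1 (b1 + b2)) :
    thmOneSol a1 0 b1 b2 pr θ = (a1 * pr θ - b1) / b2 := by
  simp [thmOneSol, not_lt.2 h.1, h.2]

theorem thmOneSol_const_mul {b : ℝ} (hb : 0 < b) {f : ℝ → ℝ} {θ : ℝ}
    (hf : f θ ∈ Set.Icc 0 1) :
    thmOneSol 1 0 0 b (fun u => b * f u) θ = f θ := by
  rw [thmOneSol_of_mem_Icc (pr := fun u => b * f u)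
    ⟨by simpa using mul_nonneg hb.le hf.1, by simpa using mul_le_of_le_one_right hb.le hf.2⟩]
  simp [hb.ne']

theorem stmt16_general (Θ : Set ℝ)
    (IA : ℝ → ℝ)
    (hIA01 : ∀ θ ∈ Θ, IA θ ∈ Set.Icc (0 : ℝ) 1)
    (hIApos : 0 < ∫ θ in Θ, IA θ)
    (b2 : ℝ) (hb2 : b2 = 1 / ∫ θ in Θ, IA θ) :
    0 < b2 ∧ (∀ θ ∈ Θ, 0 ≤ b2 * IA θ) ∧
    (∫ θ in Θ, b2 * IA θ) = 1 ∧
    (∀ θ ∈ Θ, IA θ < 1 →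
      thmOneSol 1 0 0 b2 (fun u => b2 * IA u) θ = IA θ) := by
  have hb2pos : 0 < b2 := hb2 ▸ one_div_pos.2 hIApos
  refine ⟨hb2pos, fun θ hθ => mul_nonneg hb2pos.le (hIA01 θ hθ).1, ?_,
    fun θ hθ _ => thmOneSol_const_mul hb2pos (hIA01 θ hθ)⟩
  rw [integral_const_mul, hb2, one_div_mul_cancel hIApos.ne']

/-- for an unbounded interval `Θ` and an integrable membership
function `I_A` with `∫_Θ I_A > 0` and `I_A < 1` on `Θ`, taking `a₁ = 1`,
`a₂ = 0`, `b₁ = 0` and `b₂ = 1/∫_Θ I_A`, the function `π = b₂ · I_A` is a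
probability density on `Θ` whose Theorem-1 solution equals `I_A` at every
`θ ∈ Θ` with `I_A(θ) < 1`; so every integrable membership function is realized
by some loss function and prior density. -/
theorem stmt16 (Θ : Set ℝ) (hΘ : Θ.OrdConnected) (hΘm : MeasurableSet Θ)
    (hΘinf : volume Θ = ⊤)
    (IA : ℝ → ℝ) (hIAm : Measurable IA)
    (hIA01 : ∀ θ ∈ Θ, IA θ ∈ Set.Icc (0 : ℝ) 1)
    (hIAlt1 : ∀ θ ∈ Θ, IA θ < 1)
    (hIAint : IntegrableOn IA Θ)
    (hIApos : 0 < ∫ θ in Θ, IA θ)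
    (b2 : ℝ) (hb2 : b2 = 1 / ∫ θ in Θ, IA θ) :
    0 < b2 ∧ (∀ θ ∈ Θ, 0 ≤ b2 * IA θ) ∧
    (∫ θ in Θ, b2 * IA θ) = 1 ∧
    (∀ θ ∈ Θ, IA θ < 1 →
      thmOneSol 1 0 0 b2 (fun u => b2 * IA u) θ = IA θ) :=
  stmt16_general Θ IA hIA01 hIApos b2 hb2
end
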